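/- (Estimate (3.7).) With γ_0 and γ_j as in the context, for all integers j ≥ 1 and k ≥ 0, writing i = p^j·k, one has |γ_j^k / k!| ≤ p^{−(i(p−1)/p + s_i/(p−1))}. -/

import Mathlib

/-!
Because `∑ₘ γ₀ ^ p ^ m / p ^ m = 0`, `γ_j` is minus the tail `∑_{m > j}`. The `m`-th term has
norm `p ^ (m - p ^ m / (p - 1))`, which decreases in `m`, so the ultrametric inequality gives
`|γ_j| ≤ p ^ (j + 1 - p ^ (j + 1) / (p - 1))`. Legendre's formula gives
`|k!| = p ^ (-(k - s_k) / (p - 1))`, and `s_i = s_k` because `i = p ^ j * k` only appends zero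
digits. What remains is an elementary inequality between exponents, valid for `j ≥ 1`.
-/

open Finset

namespace IsUltrametricDist

lemma norm_sum_range_le_of_hasSum_zero {E : Type*} [NormedAddCommGroup E] [IsUltrametricDist E]
    {f : ℕ → E} (hf : HasSum f 0) {n : ℕ} {C : ℝ} (hC : 0 ≤ C) (h : ∀ m, n ≤ m → ‖f m‖ ≤ C) :
    ‖∑ i ∈ range n, f i‖ ≤ C := by
  have hsplit := hf.summable.sum_add_tsum_nat_add n
  rw [hf.tsum_eq, add_eq_zero_iff_eq_neg] at hsplit
  rw [hsplit, norm_neg]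
  exact norm_tsum_le_of_forall_le_of_nonneg hC fun m => h _ (Nat.le_add_left n m)

variable {K : Type*} [NormedField K] [IsUltrametricDist K]

lemma norm_natCast_eq_one_of_coprime {p m : ℕ} (hp : ‖(p : K)‖ < 1) (hpm : p.Coprime m) :
    ‖(m : K)‖ = 1 := by
  refine le_antisymm (norm_natCast_le_one K m) ?_
  obtain ⟨u, v, huv⟩ := Nat.isCoprime_iff_coprime.mpr hpm.symm
  have hbezout : (u : K) * m + v * p = 1 := by exact_mod_cast congrArg (Int.cast : ℤ → K) huv
  have hle : 1 ≤ max ‖(m : K)‖ ‖(p : K)‖ := calc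
    1 = ‖(u : K) * m + v * p‖ := by rw [hbezout, norm_one]
    _ ≤ max ‖(u : K) * m‖ ‖(v : K) * p‖ := norm_add_le_max _ _
    _ ≤ max ‖(m : K)‖ ‖(p : K)‖ := by
      rw [norm_mul, norm_mul]
      exact max_le_max (mul_le_of_le_one_left (norm_nonneg _) (norm_intCast_le_one K u))
        (mul_le_of_le_one_left (norm_nonneg _) (norm_intCast_le_one K v))
  exact (le_max_iff.mp hle).resolve_right hp.not_ge

lemma norm_natCast_eq_pow_padicValNat {p n : ℕ} [Fact p.Prime] (hp : ‖(p : K)‖ < 1)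
    (hn : n ≠ 0) : ‖(n : K)‖ = ‖(p : K)‖ ^ padicValNat p n := by
  conv_lhs => rw [← Nat.ordProj_mul_ordCompl_eq_self n p]
  rw [Nat.cast_mul, norm_mul, Nat.cast_pow, norm_pow,
    norm_natCast_eq_one_of_coprime hp (Nat.coprime_ordCompl Fact.out hn), mul_one,
    Nat.factorization_def n Fact.out]

end IsUltrametricDist

theorem Nat.digits_sum_base_pow_mul {b : ℕ} (hb : 1 < b) (k m : ℕ) :
    (b.digits (b ^ k * m)).sum = (b.digits m).sum := by
  rcases m.eq_zero_or_pos with rfl | hm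
  · simp
  · simp [Nat.digits_base_pow_mul hb hm]

/-- `‖γ₀ ^ p ^ m / p ^ m‖ = p ^ termExponent p m`, the size of the `m`-th term defining `γ_j`. -/
noncomputable def termExponent (r : ℝ) (m : ℕ) : ℝ := m - r ^ m / (r - 1)

lemma termExponent_antitone {r : ℝ} (hr : 1 < r) : Antitone (termExponent r) := by
  refine antitone_nat_of_succ_le fun m => ?_
  have hstep : r ^ (m + 1) / (r - 1) = r ^ m / (r - 1) + r ^ m := by
    field_simp [(sub_pos.mpr hr).ne']
    ring
  have := one_le_pow₀ (n := m) hr.le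
  simp only [termExponent]
  push_cast
  linarith

lemma mul_sub_one_mul_add_le_two_mul_pow {r : ℝ} (hr : 2 ≤ r) {j : ℕ} (hj : 1 ≤ j) :
    r * (r - 1) * (j + 1) + r + r ^ j ≤ 2 * r ^ (j + 1) := by
  induction j, hj using Nat.le_induction with
  | base => ring_nf; rfl
  | succ j hj ih =>
    have hsq : r ^ 2 ≤ r ^ (j + 1) := pow_le_pow_right₀ (by linarith) (by omega)
    have hsucc : r ^ (j + 1) = r * r ^ j := pow_succ' r j
    have hsucc' : r ^ (j + 1 + 1) = r * r ^ (j + 1) := pow_succ' r (j + 1)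
    have hpos : 0 ≤ r ^ j := by positivity
    push_cast
    nlinarith

-- `(k - s) / (r - 1)` is the `p`-adic valuation of `k!`, by Legendre's formula.
lemma termExponent_succ_mul_add_le {r : ℝ} (hr : 2 ≤ r) {j : ℕ} (hj : 1 ≤ j) {k : ℝ} (hk : 0 ≤ k)
    (s : ℝ) : termExponent r (j + 1) * k + (k - s) / (r - 1) ≤
      -(r ^ j * k * (r - 1) / r + s / (r - 1)) := by
  have hr1 : 0 < r - 1 := by linarith
  have key := mul_sub_one_mul_add_le_two_mul_pow hr hj
  rw [← sub_nonpos]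
  have hEq : termExponent r (j + 1) * k + (k - s) / (r - 1) -
      -(r ^ j * k * (r - 1) / r + s / (r - 1)) =
      k * (r * (r - 1) * (j + 1) + r + r ^ j - 2 * r ^ (j + 1)) / ((r - 1) * r) := by
    simp only [termExponent]
    field_simp
    push_cast
    ring
  rw [hEq]
  exact div_nonpos_of_nonpos_of_nonneg (mul_nonpos_of_nonneg_of_nonpos hk (by linarith))
    (by positivity)

lemma norm_pow_pow_div_pow_eq_rpow {K : Type*} [NormedField K] {p : ℕ} (hp : 0 < p)
    (hpK : ‖(p : K)‖ = (p : ℝ)⁻¹) {x : K} (hx : ‖x‖ = (p : ℝ) ^ (-(1 : ℝ) / ((p : ℝ) - 1)))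
    (m : ℕ) : ‖x ^ p ^ m / (p : K) ^ m‖ = (p : ℝ) ^ termExponent p m := by
  have hp0 : (0 : ℝ) ≤ p := Nat.cast_nonneg p
  rw [norm_div, norm_pow, norm_pow, hx, hpK, ← Real.rpow_natCast _ (p ^ m), ← Real.rpow_mul hp0,
    inv_pow, div_inv_eq_mul, ← Real.rpow_natCast (p : ℝ) m, ← Real.rpow_add (by positivity)]
  congr 1
  simp only [termExponent]
  push_cast
  ring

lemma norm_factorial_eq_rpow {K : Type*} [NormedField K] [IsUltrametricDist K] {p : ℕ}
    [hp : Fact p.Prime] (hpK : ‖(p : K)‖ = (p : ℝ)⁻¹) (k : ℕ) :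
    ‖(k.factorial : K)‖ = (p : ℝ) ^ (-(((k : ℝ) - (p.digits k).sum) / ((p : ℝ) - 1))) := by
  have hp1 : (1 : ℝ) < p := by exact_mod_cast hp.out.one_lt
  have hlt : ‖(p : K)‖ < 1 := by rw [hpK]; exact inv_lt_one_of_one_lt₀ hp1
  have hleg : ((p : ℝ) - 1) * padicValNat p k.factorial = k - (p.digits k).sum := by
    have h := congrArg (Nat.cast : ℕ → ℝ) (sub_one_mul_padicValNat_factorial (p := p) k)
    rwa [Nat.cast_mul, Nat.cast_sub hp.out.one_le, Nat.cast_sub (Nat.digit_sum_le p k),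
      Nat.cast_one] at h
  rw [IsUltrametricDist.norm_natCast_eq_pow_padicValNat hlt (Nat.factorial_ne_zero k), hpK,
    inv_pow, ← Real.rpow_natCast, ← Real.rpow_neg (by positivity), ← hleg,
    mul_div_cancel_left₀ _ (by linarith)]

theorem stmt_9_general (p : ℕ) (hp : p.Prime)
    (K : Type*) [NormedField K]
    (hna : ∀ x y : K, ‖x + y‖ ≤ max ‖x‖ ‖y‖)
    (hpnorm : ‖(p : K)‖ = ((p : ℝ))⁻¹)
    (γ₀ : K) (hγ₀ : ‖γ₀‖ = (p : ℝ) ^ (-(1 : ℝ) / ((p : ℝ) - 1)))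
    (hroot : HasSum (fun i : ℕ => γ₀ ^ p ^ i / (p : K) ^ i) 0)
    (γ : ℕ → K) (hγ : ∀ j, γ j = ∑ i ∈ Finset.range (j + 1), γ₀ ^ p ^ i / (p : K) ^ i)
    (s : ℕ → ℕ) (hs : ∀ k, s k = (Nat.digits p k).sum)
    (j k i : ℕ) (hj : 1 ≤ j) (hi : i = p ^ j * k) :
    ‖γ j ^ k / (k.factorial : K)‖ ≤
      (p : ℝ) ^ (-((i : ℝ) * ((p : ℝ) - 1) / (p : ℝ) + (s i : ℝ) / ((p : ℝ) - 1))) := by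
  have : Fact p.Prime := ⟨hp⟩
  have : IsUltrametricDist K := .isUltrametricDist_of_forall_norm_add_le_max_norm hna
  have hp2 : (2 : ℝ) ≤ p := by exact_mod_cast hp.two_le
  have hγj : ‖γ j‖ ≤ (p : ℝ) ^ termExponent p (j + 1) := by
    rw [hγ]
    refine IsUltrametricDist.norm_sum_range_le_of_hasSum_zero hroot (by positivity) fun m hm => ?_
    rw [norm_pow_pow_div_pow_eq_rpow hp.pos hpnorm hγ₀]
    exact Real.rpow_le_rpow_of_exponent_le (by linarith) (termExponent_antitone (by linarith) hm)
  have hsi : s i = s k := by rw [hs, hs, hi, Nat.digits_sum_base_pow_mul hp.one_lt]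
  calc ‖γ j ^ k / (k.factorial : K)‖ = ‖γ j‖ ^ k / ‖(k.factorial : K)‖ := by
        rw [norm_div, norm_pow]
    _ ≤ ((p : ℝ) ^ termExponent p (j + 1)) ^ k /
          (p : ℝ) ^ (-(((k : ℝ) - s k) / ((p : ℝ) - 1))) := by
        rw [norm_factorial_eq_rpow hpnorm, hs]
        gcongr
    _ = (p : ℝ) ^ (termExponent p (j + 1) * k + ((k : ℝ) - s k) / ((p : ℝ) - 1)) := by
        rw [← Real.rpow_natCast _ k, ← Real.rpow_mul (by positivity), Real.rpow_neg (by positivity),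
          div_inv_eq_mul, ← Real.rpow_add (by positivity)]
    _ ≤ _ := by
        refine Real.rpow_le_rpow_of_exponent_le (by linarith) ?_
        rw [hsi, hi, Nat.cast_mul, Nat.cast_pow]
        exact termExponent_succ_mul_add_le hp2 hj (Nat.cast_nonneg k) _

/-- Estimate (3.7): for `j ≥ 1` and `k ≥ 0`, writing `i = p^j·k`, one has
`|γ_j^k/k!| ≤ p^{−(i(p−1)/p + s_i/(p−1))}`. -/
theorem stmt_9 (p : ℕ) (hp : p.Prime)
    (K : Type*) [NormedField K] [CompleteSpace K] [CharZero K]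
    (hna : ∀ x y : K, ‖x + y‖ ≤ max ‖x‖ ‖y‖)
    (hpnorm : ‖(p : K)‖ = ((p : ℝ))⁻¹)
    (γ₀ : K) (hγ₀ : ‖γ₀‖ = (p : ℝ) ^ (-(1 : ℝ) / ((p : ℝ) - 1)))
    (hroot : HasSum (fun i : ℕ => γ₀ ^ p ^ i / (p : K) ^ i) 0)
    (γ : ℕ → K) (hγ : ∀ j, γ j = ∑ i ∈ Finset.range (j + 1), γ₀ ^ p ^ i / (p : K) ^ i)
    (s : ℕ → ℕ) (hs : ∀ k, s k = (Nat.digits p k).sum)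
    (j k i : ℕ) (hj : 1 ≤ j) (hi : i = p ^ j * k) :
    ‖γ j ^ k / (k.factorial : K)‖ ≤
      (p : ℝ) ^ (-((i : ℝ) * ((p : ℝ) - 1) / (p : ℝ) + (s i : ℝ) / ((p : ℝ) - 1))) :=
  stmt_9_general p hp K hna hpnorm γ₀ hγ₀ hroot γ hγ s hs j k i hj hi
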